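/- Let γ = (γ₁,γ₂,γ₃) : [a,b] → ℝ³ be a Euclidean C²-smooth regular curve and t ∈ [a,b] a point with ω(γ̇(t)) = 0 and (d/dt)ω(γ̇(t)) + ½γ̇₁(t)γ̇₂(t) ≠ 0. Then the limit as L → +∞ of k^{L,∇¹}_γ(t)/√L exists and equals |(d/dt)ω(γ̇(t)) + ½γ̇₁(t)γ̇₂(t)| / (γ̇₁(t)² + γ̇₂(t)²), where k^{L,∇¹}_γ is the curvature associated to the second Schouten–Van Kampen affine connection. -/
import Mathlib

open Filter Real Topology

lemma sqrt_div_sqrt' (x : ℝ) {y : ℝ} (hy : 0 ≤ y) :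
    Real.sqrt x / Real.sqrt y = Real.sqrt (x / y) := by
  rcases le_or_gt 0 x with hx | hx
  · rw [Real.sqrt_div hx]
  · rw [Real.sqrt_eq_zero'.mpr hx.le,
      Real.sqrt_eq_zero'.mpr (div_nonpos_of_nonpos_of_nonneg hx.le hy)]
    simp

lemma aux_tendsto (P Q C D : ℝ) (hD : 0 < D) :
    Tendsto (fun L : ℝ => Real.sqrt ((P + L * C^2) / D^2 - Q^2 / D^3) / Real.sqrt L)
      atTop (nhds (|C| / D)) := by
  have h2 : Tendsto (fun L : ℝ => (P / D^2 - Q^2 / D^3) * L⁻¹ + C^2 / D^2) atTop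
      (nhds (C^2 / D^2)) := by
    have := (tendsto_inv_atTop_zero.const_mul (P / D^2 - Q^2 / D^3)).add_const (C^2 / D^2)
    simpa using this
  have h3 : Tendsto (fun L : ℝ => ((P + L * C^2) / D^2 - Q^2 / D^3) / L) atTop
      (nhds (C^2 / D^2)) := by
    refine h2.congr' ?_
    filter_upwards [eventually_gt_atTop (0:ℝ)] with L hL
    have hL' : L ≠ 0 := ne_of_gt hL
    field_simp
    ring
  have h4 := (Real.continuous_sqrt.tendsto _).comp h3
  have h5 : Real.sqrt (C^2 / D^2) = |C| / D := by
    rw [Real.sqrt_div (sq_nonneg C), Real.sqrt_sq_eq_abs, Real.sqrt_sq hD.le]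
  rw [h5] at h4
  refine h4.congr' ?_
  filter_upwards [eventually_ge_atTop (0:ℝ)] with L hL
  exact (sqrt_div_sqrt' _ hL).symm

theorem curvature_limit_second_SvK_horizontal_nondeg
    (γ₁ γ₂ γ₃ ω : ℝ → ℝ) (k : ℝ → ℝ → ℝ) (a b t : ℝ)
    (ht : t ∈ Set.Icc a b)
    (hγ : ContDiffOn ℝ 2 (fun s => (γ₁ s, γ₂ s, γ₃ s)) (Set.Icc a b))
    (hreg : ∀ s ∈ Set.Icc a b, ¬ (deriv γ₁ s = 0 ∧ deriv γ₂ s = 0 ∧ deriv γ₃ s = 0))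
    (hω : ∀ s, ω s = deriv γ₃ s + (1/2) * (γ₂ s * deriv γ₁ s - γ₁ s * deriv γ₂ s))
    (hk : ∀ L s, k L s = Real.sqrt (((deriv (deriv γ₁) s)^2 + (deriv (deriv γ₂) s - L * ω s * deriv γ₁ s / 2)^2 + L * (deriv ω s + deriv γ₁ s * deriv γ₂ s / 2)^2) / ((deriv γ₁ s)^2 + (deriv γ₂ s)^2 + L * (ω s)^2)^2 - (deriv γ₁ s * deriv (deriv γ₁) s + deriv γ₂ s * (deriv (deriv γ₂) s - L * ω s * deriv γ₁ s / 2) + L * ω s * (deriv ω s + deriv γ₁ s * deriv γ₂ s / 2))^2 / ((deriv γ₁ s)^2 + (deriv γ₂ s)^2 + L * (ω s)^2)^3))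
    (h0 : ω t = 0) (h1 : deriv ω t + deriv γ₁ t * deriv γ₂ t / 2 ≠ 0) :
    Filter.Tendsto (fun L => k L t / Real.sqrt L) Filter.atTop
      (nhds (|deriv ω t + deriv γ₁ t * deriv γ₂ t / 2| / ((deriv γ₁ t)^2 + (deriv γ₂ t)^2))) := by
  have hD : 0 < (deriv γ₁ t)^2 + (deriv γ₂ t)^2 := by
    rcases (by positivity : (0:ℝ) ≤ (deriv γ₁ t)^2 + (deriv γ₂ t)^2).lt_or_eq with h | h
    · exact h
    · exfalso
      have hu : deriv γ₁ t = 0 := by nlinarith [sq_nonneg (deriv γ₁ t), sq_nonneg (deriv γ₂ t)]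
      have hv : deriv γ₂ t = 0 := by nlinarith [sq_nonneg (deriv γ₁ t), sq_nonneg (deriv γ₂ t)]
      have h3 : deriv γ₃ t = 0 := by
        have h := hω t
        rw [h0, hu, hv] at h
        linarith
      exact hreg t ht ⟨hu, hv, h3⟩
  have key := aux_tendsto ((deriv (deriv γ₁) t)^2 + (deriv (deriv γ₂) t)^2)
    (deriv γ₁ t * deriv (deriv γ₁) t + deriv γ₂ t * deriv (deriv γ₂) t)
    (deriv ω t + deriv γ₁ t * deriv γ₂ t / 2)
    ((deriv γ₁ t)^2 + (deriv γ₂ t)^2) hD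
  refine key.congr ?_
  intro L
  rw [hk L t, h0]
  norm_num
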